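/- If f is in the kernel of the Toeplitz operator T_g on H^2 (for g ∈ L^∞ of the unit circle) and f(0) = 0, then the backward shift S*f = (f - f(0))/z also lies in the kernel of T_g. That is, the kernel of a Toeplitz operator is nearly S*-invariant. -/

import Mathlib

open MeasureTheory Complex Real ComplexConjugate
open scoped ENNReal

noncomputable section

instance : Fact (0 < 2 * π) := ⟨by positivity⟩

/-- The unit circle, modelled as `ℝ / 2πℤ`. -/
abbrev UnitCircle : Type := AddCircle (2 * π)

/-- Normalized Haar (Lebesgue) measure on the circle. -/
abbrev μc : Measure UnitCircle := AddCircle.haarAddCircle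

/-- The space `L²(𝕋)`. -/
abbrev L2T : Type := Lp ℂ 2 μc

/-- The Hardy space `H²`, the closed span of `{eⁱⁿᵗ : n ≥ 0}` inside `L²(𝕋)`. -/
def H2 : Submodule ℂ L2T :=
  (Submodule.span ℂ (Set.range fun n : ℕ => (fourierLp 2 (n : ℤ) : L2T))).topologicalClosure

instance : CompleteSpace H2 :=
  IsClosed.completeSpace_coe (hs := Submodule.isClosed_topologicalClosure _)

/-- The orthogonal projection `P : L²(𝕋) → H²`. -/
def PH2 : L2T →L[ℂ] H2 := H2.orthogonalProjectionOnto

/-- Multiplication of an `L²` function by an essentially bounded symbol. -/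
def symbMul (g : UnitCircle → ℂ) (hg : MemLp g ∞ μc) (f : L2T) : L2T :=
  ((Lp.memLp f).smul (p := ∞) (r := 2) hg).toLp (g • ⇑f)

/-- The Toeplitz operator `T_g f = P(gf)`, viewed as a map `L²(𝕋) → L²(𝕋)`
(its restriction to `H²` is the classical Toeplitz operator). -/
def Toeplitz (g : UnitCircle → ℂ) (hg : MemLp g ∞ μc) (f : L2T) : L2T :=
  (PH2 (symbMul g hg f) : L2T)

/-- The boundary coordinate function `z = eⁱᵗ` on the circle. -/
def zfun : UnitCircle → ℂ := fun x => fourier 1 x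

lemma zfun_memLinfty : MemLp zfun ∞ μc := by
  refine memLp_top_of_bound ((fourier 1).continuous.aestronglyMeasurable) 1 ?_
  filter_upwards with x
  simp [zfun, Circle.norm_coe]

lemma conj_zfun_memLinfty : MemLp (fun x => conj (zfun x)) ∞ μc := by
  refine memLp_top_of_bound (Continuous.aestronglyMeasurable (Complex.continuous_conj.comp ((fourier 1).continuous))) 1 ?_
  filter_upwards with x
  simp [zfun, Circle.norm_coe]

/-- The backward shift `S* = T_{z̄}` on `L²`; its restriction to `H²` is the classical
backward shift `(S^*f)(z) = (f(z)-f(0))/z`. -/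
def Sstar (f : L2T) : L2T := Toeplitz (fun x => conj (zfun x)) conj_zfun_memLinfty f

/-- Evaluation of (the analytic extension of) `f` at the origin: the mean value `f(0) = ∫ f`. -/
def ev0 (f : L2T) : ℂ := ∫ x, f x ∂μc

/-- The constant function `1` as an element of `L²(𝕋)` (it is `e⁰`). -/
def onefun : L2T := fourierLp 2 (0 : ℤ)

lemma zpow_memLinfty (m : ℕ) : MemLp (fun x => zfun x ^ m) ∞ μc := by
  refine memLp_top_of_bound (Continuous.aestronglyMeasurable (by
    exact Continuous.pow (fourier 1).continuous m)) 1 ?_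
  filter_upwards with x
  simp [zfun, Circle.norm_coe]

/-- An essentially bounded symbol is in particular square-integrable: the associated `L²`
element. -/
def toL2 (g : UnitCircle → ℂ) (hg : MemLp g ∞ μc) : L2T :=
  (hg.mono_exponent le_top).toLp g

/-- A bounded symbol `g` is *analytic* (i.e. belongs to `H^∞`) iff multiplication by `g`
preserves the Hardy space `H²`. -/
def IsAnalytic (g : UnitCircle → ℂ) (hg : MemLp g ∞ μc) : Prop :=
  ∀ f : L2T, f ∈ H2 → symbMul g hg f ∈ H2

/-- A bounded symbol is *inner* if it is analytic and unimodular a.e. on the circle. -/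
def IsInner (g : UnitCircle → ℂ) (hg : MemLp g ∞ μc) : Prop :=
  IsAnalytic g hg ∧ ∀ᵐ x ∂μc, ‖g x‖ = 1

/-- The subspace `θ·H²` of `L²(𝕋)`. -/
def mulH2 (θ : UnitCircle → ℂ) (hθ : MemLp θ ∞ μc) : Submodule ℂ L2T :=
  Submodule.span ℂ {f : L2T | ∃ h ∈ H2, f = symbMul θ hθ h}

/-- The model space `K_θ = H² ⊖ θH²`. -/
def Kmodel (θ : UnitCircle → ℂ) (hθ : MemLp θ ∞ μc) : Submodule ℂ L2T :=
  H2 ⊓ (mulH2 θ hθ)ᗮ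

instance (θ : UnitCircle → ℂ) (hθ : MemLp θ ∞ μc) : CompleteSpace (Kmodel θ hθ) := by
  refine IsClosed.completeSpace_coe (hs := ?_)
  have : ((Kmodel θ hθ : Submodule ℂ L2T) : Set L2T)
      = (H2 : Set L2T) ∩ ((mulH2 θ hθ)ᗮ : Set L2T) := rfl
  rw [this]
  exact (Submodule.isClosed_topologicalClosure _).inter (Submodule.isClosed_orthogonal _)

/-- An element `u ∈ H²` is *outer* if the polynomial multiples of `u` are dense in `H²`
(Beurling). -/
def IsOuterL2 (uL : L2T) : Prop :=
  (Submodule.span ℂ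
    (Set.range fun n : ℕ => symbMul (fun x => zfun x ^ n) (zpow_memLinfty n) uL)).topologicalClosure
    = H2

open scoped ComplexInnerProductSpace

instance (U : Submodule ℂ L2T) : CompleteSpace (H2 ⊓ Uᗮ : Submodule ℂ L2T) := by
  refine IsClosed.completeSpace_coe (hs := ?_)
  have : ((H2 ⊓ Uᗮ : Submodule ℂ L2T) : Set L2T) = (H2 : Set L2T) ∩ (Uᗮ : Set L2T) := rfl
  rw [this]
  exact (Submodule.isClosed_topologicalClosure _).inter (Submodule.isClosed_orthogonal _)

/-!
Work with Fourier coefficients `⟪eⁱᵐᵗ, ·⟫`: `H²` consists of the functions whose negative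
coefficients vanish and `T_g u = 0` says that the nonnegative coefficients of `g u` vanish.
If `f ∈ H²` and `f(0) = 0`, also the zeroth coefficient of `f` vanishes, so `z̄ f ∈ H²` and
hence `S* f = z̄ f`. The `n`-th coefficient of `g z̄ f` is the `(n+1)`-st coefficient of `g f`,
so `T_g (S* f) = 0`.
-/

lemma inner_fourierLp_eq_integral (m : ℤ) (w : L2T) {φ : UnitCircle → ℂ} (hw : ⇑w =ᵐ[μc] φ) :
    ⟪(fourierLp 2 m : L2T), w⟫ = ∫ x, conj (fourier m x) * φ x ∂μc := by
  rw [MeasureTheory.L2.inner_def]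
  refine integral_congr_ae ?_
  filter_upwards [coeFn_fourierLp 2 m, hw] with x h1 h2
  rw [RCLike.inner_apply, h1, h2, mul_comm]

lemma inner_fourierLp_zero_eq_ev0 (f : L2T) : ⟪(fourierLp 2 (0 : ℤ) : L2T), f⟫ = ev0 f := by
  simp [inner_fourierLp_eq_integral 0 f Filter.EventuallyEq.rfl, ev0]

lemma fourierLp_mem_H2 (n : ℕ) : (fourierLp 2 (n : ℤ) : L2T) ∈ H2 :=
  Submodule.le_topologicalClosure _ (Submodule.subset_span ⟨n, rfl⟩)

lemma H2_le_of_fourierLp_mem {V : Submodule ℂ L2T} (hV : IsClosed (V : Set L2T))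
    (h : ∀ n : ℕ, (fourierLp 2 (n : ℤ) : L2T) ∈ V) : H2 ≤ V :=
  Submodule.topologicalClosure_minimal _ (Submodule.span_le.mpr (Set.range_subset_iff.mpr h)) hV

lemma inner_fourierLp_eq_zero_of_mem_H2 {u : L2T} (hu : u ∈ H2) {m : ℤ} (hm : m < 0) :
    ⟪(fourierLp 2 m : L2T), u⟫ = 0 := by
  refine H2_le_of_fourierLp_mem
    (V := LinearMap.ker (innerSL ℂ (fourierLp 2 m : L2T) : L2T →ₗ[ℂ] ℂ))
    (ContinuousLinearMap.isClosed_ker _) (fun n => ?_) hu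
  have h := (fourierBasis (T := 2 * π)).orthonormal.2 (i := m) (j := (n : ℤ)) (by omega)
  rwa [coe_fourierBasis] at h

lemma mem_H2_of_inner_fourierLp_eq_zero {u : L2T}
    (h : ∀ m : ℤ, m < 0 → ⟪(fourierLp 2 m : L2T), u⟫ = 0) : u ∈ H2 := by
  have hterm : ∀ i : ℤ, fourierBasis.repr u i • (fourierBasis i : L2T) ∈ H2 := by
    intro i
    rcases lt_or_ge i 0 with hi | hi
    · rw [fourierBasis.repr_apply_apply, coe_fourierBasis, h i hi, zero_smul]
      exact H2.zero_mem
    · lift i to ℕ using hi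
      rw [coe_fourierBasis]
      exact H2.smul_mem _ (fourierLp_mem_H2 i)
  exact (Submodule.isClosed_topologicalClosure _).mem_of_tendsto (fourierBasis.hasSum_repr u)
    (Filter.Eventually.of_forall fun s => H2.sum_mem fun i _ => hterm i)

lemma mem_orthogonal_H2_iff {u : L2T} :
    u ∈ H2ᗮ ↔ ∀ n : ℕ, ⟪(fourierLp 2 (n : ℤ) : L2T), u⟫ = 0 := by
  refine ⟨fun hu n => Submodule.inner_right_of_mem_orthogonal (fourierLp_mem_H2 n) hu,
    fun h => (Submodule.mem_orthogonal' _ _).mpr ?_⟩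
  refine H2_le_of_fourierLp_mem (V := LinearMap.ker (innerSL ℂ u : L2T →ₗ[ℂ] ℂ))
    (ContinuousLinearMap.isClosed_ker _) fun n => ?_
  simpa [inner_eq_zero_symm] using h n

lemma toeplitz_eq_zero_iff (g : UnitCircle → ℂ) (hg : MemLp g ∞ μc) (f : L2T) :
    Toeplitz g hg f = 0 ↔ ∀ n : ℕ, ⟪(fourierLp 2 (n : ℤ) : L2T), symbMul g hg f⟫ = 0 := by
  rw [Toeplitz, PH2, ZeroMemClass.coe_eq_zero, Submodule.orthogonalProjectionOnto_eq_zero_iff,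
    mem_orthogonal_H2_iff]

lemma toeplitz_eq_symbMul_of_mem_H2 {g : UnitCircle → ℂ} {hg : MemLp g ∞ μc} {f : L2T}
    (h : symbMul g hg f ∈ H2) : Toeplitz g hg f = symbMul g hg f :=
  (Submodule.starProjection_eq_self_iff (K := H2)).mpr h

lemma coeFn_symbMul (g : UnitCircle → ℂ) (hg : MemLp g ∞ μc) (f : L2T) :
    ⇑(symbMul g hg f) =ᵐ[μc] fun x => g x * f x :=
  MemLp.coeFn_toLp _

lemma symbMul_comm (g : UnitCircle → ℂ) (hg : MemLp g ∞ μc) (h : UnitCircle → ℂ)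
    (hh : MemLp h ∞ μc) (f : L2T) :
    symbMul g hg (symbMul h hh f) = symbMul h hh (symbMul g hg f) := by
  refine Lp.ext ?_
  filter_upwards [coeFn_symbMul g hg (symbMul h hh f), coeFn_symbMul h hh f,
    coeFn_symbMul h hh (symbMul g hg f), coeFn_symbMul g hg f] with x h1 h2 h3 h4
  rw [h1, h2, h3, h4, mul_left_comm]

lemma inner_fourierLp_symbMul_conj_zfun (m : ℤ) (f : L2T) :
    ⟪(fourierLp 2 m : L2T), symbMul (fun x => conj (zfun x)) conj_zfun_memLinfty f⟫
      = ⟪(fourierLp 2 (m + 1) : L2T), f⟫ := by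
  rw [inner_fourierLp_eq_integral m _ (coeFn_symbMul _ _ f),
    inner_fourierLp_eq_integral (m + 1) f Filter.EventuallyEq.rfl]
  refine integral_congr_ae (Filter.Eventually.of_forall fun x => ?_)
  simp only [zfun, fourier_add, map_mul]
  ring

lemma symbMul_conj_zfun_mem_H2 {f : L2T} (hf : f ∈ H2) (h0 : ev0 f = 0) :
    symbMul (fun x => conj (zfun x)) conj_zfun_memLinfty f ∈ H2 := by
  refine mem_H2_of_inner_fourierLp_eq_zero fun m hm => ?_
  rw [inner_fourierLp_symbMul_conj_zfun]
  rcases (show m + 1 < 0 ∨ m + 1 = 0 by omega) with hneg | hzero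
  · exact inner_fourierLp_eq_zero_of_mem_H2 hf hneg
  · rw [hzero, inner_fourierLp_zero_eq_ev0, h0]

/-- The kernel of a Toeplitz operator is nearly `S*`-invariant: if
`f ∈ ker T_g ⊆ H²` and `f(0) = 0`, then `S*f ∈ ker T_g`. -/
theorem toeplitz_kernel_nearly_Sstar_invariant
    (g : UnitCircle → ℂ) (hg : MemLp g ∞ μc) (f : L2T)
    (hf : f ∈ H2) (hker : Toeplitz g hg f = 0) (h0 : ev0 f = 0) :
    Sstar f ∈ H2 ∧ Toeplitz g hg (Sstar f) = 0 := by
  have hmem := symbMul_conj_zfun_mem_H2 hf h0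
  have hS : Sstar f = symbMul (fun x => conj (zfun x)) conj_zfun_memLinfty f :=
    toeplitz_eq_symbMul_of_mem_H2 hmem
  refine ⟨hS ▸ hmem, (toeplitz_eq_zero_iff g hg _).mpr fun n => ?_⟩
  rw [hS, symbMul_comm, inner_fourierLp_symbMul_conj_zfun]
  exact_mod_cast (toeplitz_eq_zero_iff g hg f).mp hker (n + 1)
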